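/- Suppose E_{(λ_0,λ_1,λ_2,…,λ_n)}, E_{(λ_0,λ_2,…,λ_n)}, E_{(λ_1,λ_2,…,λ_n)} and E_{(λ_2,…,λ_n)} are extended Chebyshev systems for {a,b}, a ≠ b ∈ ℝ, and let λ_0 ≠ λ_1. Then for each k there exists a nonzero constant C such that p_{(λ_0,λ_2,…,λ_n),k} − p_{(λ_1,λ_2,…,λ_n),k} = C · p_{(λ_0,λ_1,λ_2,…,λ_n),k+1}. Moreover lim_{x→b} p_{(λ_0,λ_2,…,λ_n),k}(x) / p_{(λ_1,λ_2,…,λ_n),k}(x) exists and is not equal to 1. -/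

import Mathlib

/-!
Write `μ = (λ₂,…,λₙ)` and `m = n − 1 − k`. The difference `g = p_{(λ₀,μ),k} − p_{(λ₁,μ),k}` lies
in `E_{(λ₀,λ₁,μ)}`, since the operators `D − λ₀` and `D − λ₁` commute. It vanishes to order `k + 1`
at `a` (both terms have `k`-th derivative `1` there) and to order `m` at `b`: `n` zeros in all.
The functions of the `(n+1)`-dimensional Chebyshev space `E_{(λ₀,λ₁,μ)}` with these zeros form a
line spanned by `p_{(λ₀,λ₁,μ),k+1}`, so `g = C • p_{(λ₀,λ₁,μ),k+1}` with `C = g^{(k+1)}(a)`. If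
`C = 0`, the two Bernstein functions coincide, hence lie in `E_{(λ₀,μ)} ∩ E_{(λ₁,μ)} = E_μ` and have
`n − 1` zeros there, so they vanish, contradicting the normalization. Near `b` both vanish to order
exactly `m`, so by Taylor's theorem their quotient tends to the quotient of their `m`-th
derivatives at `b`, and these differ by `C · p_{(λ₀,λ₁,μ),k+1}^{(m)}(b) ≠ 0`.
-/

open Filter Topology Set

noncomputable section

/-- The differential operator `(d/dx − λ₀)⋯(d/dx − λₙ)` applied to `f`,
where `λ₀,…,λₙ` are the entries of the list. -/
def LOp : List ℂ → (ℝ → ℂ) → (ℝ → ℂ)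
  | [], f => f
  | c :: r, f => LOp r (fun x => deriv f x - c * f x)

/-- The space `E_Λ` of exponential polynomials with eigenvalue vector `l`. -/
def ExpPoly (l : List ℂ) : Set (ℝ → ℂ) :=
  {f | ContDiff ℝ (⊤ : ℕ∞) f ∧ LOp l f = 0}

/-- `f` has a zero of order (multiplicity) exactly `k` at `x₀`. -/
def HasZeroOfOrder (f : ℝ → ℂ) (x₀ : ℝ) (k : ℕ) : Prop :=
  (∀ j < k, iteratedDeriv j f x₀ = 0) ∧ iteratedDeriv k f x₀ ≠ 0

/-- `E_l` (with `l.length = n + 1`) is an extended Chebyshev system for `A ⊆ ℝ`: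
every nonzero member has at most `n` zeros in `A`, counted with multiplicity. -/
def IsExtChebyshev (l : List ℂ) (A : Set ℝ) : Prop :=
  ∀ f ∈ ExpPoly l, f ≠ 0 → ∀ (s : Finset ℝ) (m : ℝ → ℕ),
    (↑s : Set ℝ) ⊆ A → (∀ x ∈ s, ∀ j < m x, iteratedDeriv j f x = 0) →
    ∑ x ∈ s, m x ≤ l.length - 1

/-- `p k`, `k = 0,…,n` (with `l.length = n + 1`) is the normalized Bernstein basis of
`E_l` for the points `a ≠ b`: `p k` lies in `E_l`, has a zero of order exactly `k`
at `a`, a zero of order exactly `n − k` at `b`, and `(p k)^{(k)}(a) = 1`. -/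
def IsBernsteinBasis (l : List ℂ) (a b : ℝ) (p : ℕ → ℝ → ℂ) : Prop :=
  ∀ k ≤ l.length - 1,
    p k ∈ ExpPoly l ∧ HasZeroOfOrder (p k) a k ∧
      HasZeroOfOrder (p k) b (l.length - 1 - k) ∧ iteratedDeriv k (p k) a = 1

/-- `E_l` is closed under (pointwise) complex conjugation. -/
def ConjClosed (l : List ℂ) : Prop :=
  ∀ f ∈ ExpPoly l, (fun x => starRingEnd ℂ (f x)) ∈ ExpPoly l

def derivSubMul (c : ℂ) (f : ℝ → ℂ) : ℝ → ℂ := fun x => deriv f x - c * f x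

section Operators

variable {f g : ℝ → ℂ}

theorem LOp_cons (c : ℂ) (l : List ℂ) (f : ℝ → ℂ) :
    LOp (c :: l) f = LOp l (derivSubMul c f) := rfl

theorem contDiff_derivSubMul (hf : ContDiff ℝ (⊤ : ℕ∞) f) (c : ℂ) :
    ContDiff ℝ (⊤ : ℕ∞) (derivSubMul c f) :=
  (contDiff_infty_iff_deriv.mp hf).2.sub (contDiff_const.mul hf)

theorem derivSubMul_zero (c : ℂ) : derivSubMul c 0 = 0 := by
  funext x
  simp [derivSubMul]

theorem derivSubMul_add (hf : Differentiable ℝ f) (hg : Differentiable ℝ g) (c : ℂ) :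
    derivSubMul c (f + g) = derivSubMul c f + derivSubMul c g := by
  funext x
  simp only [derivSubMul, Pi.add_apply, deriv_add (hf x) (hg x)]
  ring

theorem derivSubMul_smul (hf : Differentiable ℝ f) (c d : ℂ) :
    derivSubMul c (d • f) = d • derivSubMul c f := by
  funext x
  simp only [derivSubMul, Pi.smul_apply, smul_eq_mul, deriv_const_smul d (hf x)]
  ring

theorem derivSubMul_comm (hf : Differentiable ℝ f) (hf' : Differentiable ℝ (deriv f))
    (c d : ℂ) : derivSubMul c (derivSubMul d f) = derivSubMul d (derivSubMul c f) := by
  funext x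
  have hD (e : ℂ) : deriv (derivSubMul e f) x = deriv (deriv f) x - e * deriv f x :=
    ((hf' x).hasDerivAt.sub ((hf x).hasDerivAt.const_mul e)).deriv
  simp only [derivSubMul] at hD ⊢
  rw [hD, hD]
  ring

theorem LOp_zero (l : List ℂ) : LOp l 0 = 0 := by
  induction l with
  | nil => rfl
  | cons c r ih => rw [LOp_cons, derivSubMul_zero, ih]

theorem LOp_add (l : List ℂ) (hf : ContDiff ℝ (⊤ : ℕ∞) f)
    (hg : ContDiff ℝ (⊤ : ℕ∞) g) : LOp l (f + g) = LOp l f + LOp l g := by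
  induction l generalizing f g with
  | nil => rfl
  | cons c r ih =>
    rw [LOp_cons, derivSubMul_add (hf.differentiable (by simp)) (hg.differentiable (by simp)),
      ih (contDiff_derivSubMul hf c) (contDiff_derivSubMul hg c)]
    rfl

theorem LOp_smul (l : List ℂ) (d : ℂ) (hf : ContDiff ℝ (⊤ : ℕ∞) f) :
    LOp l (d • f) = d • LOp l f := by
  induction l generalizing f with
  | nil => rfl
  | cons c r ih =>
    rw [LOp_cons, derivSubMul_smul (hf.differentiable (by simp)), ih (contDiff_derivSubMul hf c)]
    rfl

theorem LOp_sub (l : List ℂ) (hf : ContDiff ℝ (⊤ : ℕ∞) f)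
    (hg : ContDiff ℝ (⊤ : ℕ∞) g) : LOp l (f - g) = LOp l f - LOp l g := by
  have hg' : ContDiff ℝ (⊤ : ℕ∞) ((-1 : ℂ) • g) := contDiff_const.smul hg
  rw [sub_eq_add_neg, ← neg_one_smul ℂ g, LOp_add l hf hg', LOp_smul l _ hg, neg_one_smul,
    ← sub_eq_add_neg]

theorem LOp_derivSubMul (l : List ℂ) (c : ℂ) (hf : ContDiff ℝ (⊤ : ℕ∞) f) :
    LOp l (derivSubMul c f) = derivSubMul c (LOp l f) := by
  induction l generalizing f with
  | nil => rfl
  | cons d r ih =>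
    have hf' := (contDiff_infty_iff_deriv.mp hf).2
    rw [LOp_cons, LOp_cons, derivSubMul_comm (hf.differentiable (by simp))
      (hf'.differentiable (by simp)), ih (contDiff_derivSubMul hf d)]

theorem LOp_cons_cons_comm (c d : ℂ) (r : List ℂ) (hf : ContDiff ℝ (⊤ : ℕ∞) f) :
    LOp (c :: d :: r) f = LOp (d :: c :: r) f := by
  have hf' := (contDiff_infty_iff_deriv.mp hf).2
  simp only [LOp_cons, derivSubMul_comm (hf.differentiable (by simp))
    (hf'.differentiable (by simp))]

end Operators

section ExpPoly

def expPolySubmodule (l : List ℂ) : Submodule ℂ (ℝ → ℂ) where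
  carrier := ExpPoly l
  add_mem' hf hg := ⟨hf.1.add hg.1, by rw [LOp_add l hf.1 hg.1, hf.2, hg.2, add_zero]⟩
  zero_mem' := ⟨contDiff_const, LOp_zero l⟩
  smul_mem' d _ hf := ⟨contDiff_const.smul hf.1, by rw [LOp_smul l d hf.1, hf.2, smul_zero]⟩

theorem expPoly_subset_cons (c : ℂ) (l : List ℂ) : ExpPoly l ⊆ ExpPoly (c :: l) :=
  fun _ ⟨hf, h⟩ => ⟨hf, by rw [LOp_cons, LOp_derivSubMul l c hf, h, derivSubMul_zero]⟩

theorem expPoly_cons_cons_comm (c d : ℂ) (r : List ℂ) :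
    ExpPoly (c :: d :: r) = ExpPoly (d :: c :: r) := by
  ext f
  exact and_congr_right fun hf => by rw [LOp_cons_cons_comm c d r hf]

theorem expPoly_cons_inter_cons_subset {c d : ℂ} (hcd : c ≠ d) (r : List ℂ) :
    ExpPoly (c :: r) ∩ ExpPoly (d :: r) ⊆ ExpPoly r := by
  rintro f ⟨⟨hf, hc⟩, -, hd⟩
  refine ⟨hf, ?_⟩
  have key : derivSubMul c f - derivSubMul d f = (d - c) • f := by
    funext x
    simp only [derivSubMul, Pi.sub_apply, Pi.smul_apply, smul_eq_mul]
    ring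
  have h := congrArg (LOp r) key
  rw [LOp_sub r (contDiff_derivSubMul hf c) (contDiff_derivSubMul hf d), LOp_smul r _ hf,
    ← LOp_cons, ← LOp_cons, hc, hd, sub_zero] at h
  exact (smul_eq_zero.mp h.symm).resolve_left (sub_ne_zero.mpr hcd.symm)

end ExpPoly

section Vanishing

variable {E : Type*} [NormedAddCommGroup E] [NormedSpace ℝ E]

def VanishesToOrder (f : ℝ → E) (x₀ : ℝ) (m : ℕ) : Prop :=
  ∀ j < m, iteratedDeriv j f x₀ = 0

theorem VanishesToOrder.succ {f : ℝ → E} {x₀ : ℝ} {m : ℕ} (h : VanishesToOrder f x₀ m)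
    (hm : iteratedDeriv m f x₀ = 0) : VanishesToOrder f x₀ (m + 1) := fun j hj =>
  (Nat.lt_succ_iff_lt_or_eq.mp hj).elim (h j) fun hjm => hjm ▸ hm

theorem VanishesToOrder.sub {f g : ℝ → E} {x₀ : ℝ} {m : ℕ} (hf : ContDiff ℝ m f)
    (hg : ContDiff ℝ m g) (hf₀ : VanishesToOrder f x₀ m) (hg₀ : VanishesToOrder g x₀ m) :
    VanishesToOrder (f - g) x₀ m := fun j hj => by
  have hjm : (j : WithTop ℕ∞) ≤ m := by exact_mod_cast hj.le
  rw [iteratedDeriv_sub ((hf.of_le hjm).contDiffAt) ((hg.of_le hjm).contDiffAt), hf₀ j hj,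
    hg₀ j hj, sub_zero]

theorem VanishesToOrder.const_smul {f : ℝ → ℂ} {x₀ : ℝ} {m : ℕ} (h : VanishesToOrder f x₀ m)
    (c : ℂ) : VanishesToOrder (c • f) x₀ m := fun j hj => by
  rw [iteratedDeriv_const_smul_field, h j hj, smul_zero]

theorem taylorWithinEval_univ_of_vanishesToOrder {f : ℝ → E} {x₀ : ℝ} {m : ℕ}
    (h : VanishesToOrder f x₀ m) (x : ℝ) :
    taylorWithinEval f m univ x₀ x =
      ((m.factorial : ℝ)⁻¹ * (x - x₀) ^ m) • iteratedDeriv m f x₀ := by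
  rw [taylor_within_apply, Finset.sum_range_succ, Finset.sum_eq_zero, zero_add,
    iteratedDerivWithin_univ]
  intro j hj
  rw [iteratedDerivWithin_univ, h j (Finset.mem_range.mp hj), smul_zero]

theorem tendsto_inv_pow_smul_of_vanishesToOrder {f : ℝ → E} {x₀ : ℝ} {m : ℕ}
    (hf : ContDiff ℝ m f) (h : VanishesToOrder f x₀ m) :
    Tendsto (fun x => ((x - x₀) ^ m)⁻¹ • f x) (𝓝[≠] x₀)
      (𝓝 ((m.factorial : ℝ)⁻¹ • iteratedDeriv m f x₀)) := by
  have hT := (taylor_tendsto convex_univ (mem_univ x₀) hf.contDiffOn).mono_left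
    (nhdsWithin_mono x₀ (subset_univ {x₀}ᶜ))
  refine tendsto_sub_nhds_zero_iff.mp (hT.congr' ?_)
  filter_upwards [self_mem_nhdsWithin] with x hx
  have hx' : (x - x₀) ^ m ≠ 0 := pow_ne_zero m (sub_ne_zero.mpr hx)
  rw [taylorWithinEval_univ_of_vanishesToOrder h, smul_sub, smul_smul, ← mul_assoc,
    mul_comm _ (m.factorial : ℝ)⁻¹, mul_assoc, inv_mul_cancel₀ hx', mul_one]

theorem tendsto_div_of_vanishesToOrder {f g : ℝ → ℂ} {x₀ : ℝ} {m : ℕ}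
    (hf : ContDiff ℝ m f) (hg : ContDiff ℝ m g) (hf₀ : VanishesToOrder f x₀ m)
    (hg₀ : VanishesToOrder g x₀ m) (hgm : iteratedDeriv m g x₀ ≠ 0) :
    Tendsto (fun x => f x / g x) (𝓝[≠] x₀)
      (𝓝 (iteratedDeriv m f x₀ / iteratedDeriv m g x₀)) := by
  have hc : (((m.factorial : ℝ)⁻¹ : ℝ) : ℂ) ≠ 0 := by simp [Nat.factorial_ne_zero]
  have H := (tendsto_inv_pow_smul_of_vanishesToOrder hf hf₀).div
    (tendsto_inv_pow_smul_of_vanishesToOrder hg hg₀)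
    (by rw [Complex.real_smul]; exact mul_ne_zero hc hgm)
  rw [Complex.real_smul, Complex.real_smul, mul_div_mul_left _ _ hc] at H
  refine H.congr' ?_
  filter_upwards [self_mem_nhdsWithin] with x hx
  have hx' : ((((x - x₀) ^ m)⁻¹ : ℝ) : ℂ) ≠ 0 := by
    exact_mod_cast inv_ne_zero (pow_ne_zero m (sub_ne_zero.mpr hx))
  rw [Pi.div_apply, Complex.real_smul, Complex.real_smul, mul_div_mul_left _ _ hx']

end Vanishing

section Chebyshev

variable {l : List ℂ} {a b : ℝ} {f g p : ℝ → ℂ}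

theorem contDiff_of_mem_expPoly (hf : f ∈ ExpPoly l) (n : ℕ) : ContDiff ℝ n f :=
  hf.1.of_le (by exact_mod_cast le_top)

theorem IsExtChebyshev.eq_zero_of_vanishesToOrder (hC : IsExtChebyshev l {a, b}) (hab : a ≠ b)
    (hf : f ∈ ExpPoly l) {ma mb : ℕ} (ha : VanishesToOrder f a ma) (hb : VanishesToOrder f b mb)
    (hlen : l.length ≤ ma + mb) : f = 0 := by
  -- `l.length - 1` in `IsExtChebyshev` truncates at `l = []`, but `E_[] = {0}`.
  rcases l with _ | ⟨c, l⟩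
  · exact hf.2
  by_contra hf0
  have h := hC f hf hf0 {a, b} (fun x => if x = a then ma else mb) (by simp) fun x hx j hj => by
    rcases Finset.mem_insert.mp hx with rfl | hx
    · exact ha j (by simpa using hj)
    · rw [Finset.mem_singleton.mp hx] at hj ⊢
      exact hb j (by simpa [hab.symm] using hj)
  rw [Finset.sum_pair hab, if_pos rfl, if_neg hab.symm] at h
  simp only [List.length_cons] at hlen h
  omega

theorem IsExtChebyshev.eq_smul_of_vanishesToOrder (hC : IsExtChebyshev l {a, b}) (hab : a ≠ b)
    (hg : g ∈ ExpPoly l) (hp : p ∈ ExpPoly l) {K M : ℕ} (hlen : l.length = K + M + 1)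
    (hga : VanishesToOrder g a K) (hgb : VanishesToOrder g b M)
    (hpa : VanishesToOrder p a K) (hpb : VanishesToOrder p b M) (hpK : iteratedDeriv K p a = 1) :
    g = iteratedDeriv K g a • p := by
  set C := iteratedDeriv K g a
  have hCp : C • p ∈ ExpPoly l := (expPolySubmodule l).smul_mem C hp
  have hgs := contDiff_of_mem_expPoly hg
  have hCps := contDiff_of_mem_expPoly hCp
  have hKa : iteratedDeriv K (g - C • p) a = 0 := by
    rw [iteratedDeriv_sub (hgs K).contDiffAt (hCps K).contDiffAt, iteratedDeriv_const_smul_field,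
      hpK, smul_eq_mul, mul_one, sub_self]
  refine sub_eq_zero.mp (hC.eq_zero_of_vanishesToOrder hab
    ((expPolySubmodule l).sub_mem hg hCp)
    ((hga.sub (hgs K) (hCps K) (hpa.const_smul C)).succ hKa)
    (hgb.sub (hgs M) (hCps M) (hpb.const_smul C)) (by omega))

end Chebyshev

section Bernstein

variable {μ : List ℂ} {lam0 lam1 : ℂ} {a b : ℝ} {pf p0 p1 : ℕ → ℝ → ℂ} {k : ℕ}

theorem bernstein_ne_of_ne (hμ : IsExtChebyshev μ {a, b}) (hab : a ≠ b) (h01 : lam0 ≠ lam1)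
    (hp0 : IsBernsteinBasis (lam0 :: μ) a b p0) (hp1 : IsBernsteinBasis (lam1 :: μ) a b p1)
    (hk : k ≤ μ.length) : p0 k ≠ p1 k := by
  obtain ⟨hE0, hA0, hB0, hN0⟩ := hp0 k (by simpa using hk)
  intro h
  have hEμ : p0 k ∈ ExpPoly μ :=
    expPoly_cons_inter_cons_subset h01 μ ⟨hE0, h ▸ (hp1 k (by simpa using hk)).1⟩
  rw [hμ.eq_zero_of_vanishesToOrder hab hEμ hA0.1 hB0.1 (by simp; omega)] at hN0
  simp at hN0

theorem exists_bernstein_sub_eq_smul (hfull : IsExtChebyshev (lam0 :: lam1 :: μ) {a, b})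
    (hμ : IsExtChebyshev μ {a, b}) (hab : a ≠ b) (h01 : lam0 ≠ lam1)
    (hpf : IsBernsteinBasis (lam0 :: lam1 :: μ) a b pf)
    (hp0 : IsBernsteinBasis (lam0 :: μ) a b p0) (hp1 : IsBernsteinBasis (lam1 :: μ) a b p1)
    (hk : k ≤ μ.length) : ∃ C : ℂ, C ≠ 0 ∧ p0 k - p1 k = C • pf (k + 1) := by
  obtain ⟨hE0, hA0, hB0, hN0⟩ := hp0 k (by simpa using hk)
  obtain ⟨hE1, hA1, hB1, hN1⟩ := hp1 k (by simpa using hk)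
  obtain ⟨hEf, hAf, hBf, hNf⟩ := hpf (k + 1) (by simp; omega)
  simp only [List.length_cons, add_tsub_cancel_right, Nat.add_sub_add_right] at hB0 hB1 hBf
  have hE0s := contDiff_of_mem_expPoly hE0
  have hE1s := contDiff_of_mem_expPoly hE1
  have hE0' : p0 k ∈ ExpPoly (lam0 :: lam1 :: μ) := by
    rw [expPoly_cons_cons_comm]
    exact expPoly_subset_cons lam1 _ hE0
  have hE : p0 k - p1 k ∈ ExpPoly (lam0 :: lam1 :: μ) :=
    (expPolySubmodule _).sub_mem hE0' (expPoly_subset_cons lam0 _ hE1)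
  have ha : VanishesToOrder (p0 k - p1 k) a (k + 1) :=
    (VanishesToOrder.sub (hE0s k) (hE1s k) hA0.1 hA1.1).succ <| by
      rw [iteratedDeriv_sub (hE0s k).contDiffAt (hE1s k).contDiffAt, hN0, hN1, sub_self]
  have hdiff := hfull.eq_smul_of_vanishesToOrder hab hE hEf (by simp; omega) ha
    (VanishesToOrder.sub (hE0s _) (hE1s _) hB0.1 hB1.1) hAf.1 hBf.1 hNf
  refine ⟨_, fun hC => bernstein_ne_of_ne hμ hab h01 hp0 hp1 hk ?_, hdiff⟩
  rwa [hC, zero_smul, sub_eq_zero] at hdiff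

theorem exists_tendsto_bernstein_div_ne_one (hpf : IsBernsteinBasis (lam0 :: lam1 :: μ) a b pf)
    (hp0 : IsBernsteinBasis (lam0 :: μ) a b p0) (hp1 : IsBernsteinBasis (lam1 :: μ) a b p1)
    (hk : k ≤ μ.length) {C : ℂ} (hC : C ≠ 0) (hdiff : p0 k - p1 k = C • pf (k + 1)) :
    ∃ c : ℂ, Tendsto (fun x => p0 k x / p1 k x) (𝓝[≠] b) (𝓝 c) ∧ c ≠ 1 := by
  obtain ⟨hE0, -, hB0, -⟩ := hp0 k (by simpa using hk)
  obtain ⟨hE1, -, hB1, -⟩ := hp1 k (by simpa using hk)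
  obtain ⟨-, -, hBf, -⟩ := hpf (k + 1) (by simp; omega)
  simp only [List.length_cons, add_tsub_cancel_right, Nat.add_sub_add_right] at hB0 hB1 hBf
  have hE0s := contDiff_of_mem_expPoly hE0 (μ.length - k)
  have hE1s := contDiff_of_mem_expPoly hE1 (μ.length - k)
  refine ⟨_, tendsto_div_of_vanishesToOrder hE0s hE1s hB0.1 hB1.1 hB1.2, ?_⟩
  rw [Ne, div_eq_one_iff_eq hB1.2, ← sub_eq_zero,
    ← iteratedDeriv_sub hE0s.contDiffAt hE1s.contDiffAt, hdiff, iteratedDeriv_const_smul_field]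
  exact smul_ne_zero hC hBf.2

end Bernstein

theorem bernstein_difference_and_limit_general
    (μ : List ℂ) (lam0 lam1 : ℂ) (h01 : lam0 ≠ lam1)
    (a b : ℝ) (hab : a ≠ b)
    (hfull : IsExtChebyshev (lam0 :: lam1 :: μ) {a, b})
    (hμ : IsExtChebyshev μ {a, b})
    (pf p0 p1 : ℕ → ℝ → ℂ)
    (hpf : IsBernsteinBasis (lam0 :: lam1 :: μ) a b pf)
    (hp0 : IsBernsteinBasis (lam0 :: μ) a b p0)
    (hp1 : IsBernsteinBasis (lam1 :: μ) a b p1)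
    (k : ℕ) (hk : k ≤ μ.length) :
    (∃ C : ℂ, C ≠ 0 ∧ ∀ x : ℝ, p0 k x - p1 k x = C * pf (k + 1) x) ∧
    (∃ c : ℂ, Tendsto (fun x => p0 k x / p1 k x) (𝓝[≠] b) (𝓝 c) ∧ c ≠ 1) := by
  obtain ⟨C, hC, hdiff⟩ := exists_bernstein_sub_eq_smul hfull hμ hab h01 hpf hp0 hp1 hk
  exact ⟨⟨C, hC, congrFun hdiff⟩, exists_tendsto_bernstein_div_ne_one hpf hp0 hp1 hk hC hdiff⟩

/-- **Theorem.** Suppose `E_{(λ_0,λ_1,λ_2,…,λ_n)}`, `E_{(λ_0,λ_2,…,λ_n)}`,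
`E_{(λ_1,λ_2,…,λ_n)}` and `E_{(λ_2,…,λ_n)}` are extended Chebyshev systems for
`{a,b}`, `a ≠ b ∈ ℝ`, and let `λ_0 ≠ λ_1`.  Then for each `k` there is a nonzero
constant `C` with
`p_{(λ_0,λ_2,…,λ_n),k} − p_{(λ_1,λ_2,…,λ_n),k} = C · p_{(λ_0,λ_1,λ_2,…,λ_n),k+1}`,
and `lim_{x→b} p_{(λ_0,λ_2,…,λ_n),k}(x) / p_{(λ_1,λ_2,…,λ_n),k}(x)` exists and
is different from `1`.  Here `μ` plays the role of `(λ_2,…,λ_n)`. -/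
theorem bernstein_difference_and_limit
    (μ : List ℂ) (lam0 lam1 : ℂ) (h01 : lam0 ≠ lam1)
    (a b : ℝ) (hab : a ≠ b)
    (hfull : IsExtChebyshev (lam0 :: lam1 :: μ) {a, b})
    (h0 : IsExtChebyshev (lam0 :: μ) {a, b})
    (h1 : IsExtChebyshev (lam1 :: μ) {a, b})
    (hμ : IsExtChebyshev μ {a, b})
    (pf p0 p1 : ℕ → ℝ → ℂ)
    (hpf : IsBernsteinBasis (lam0 :: lam1 :: μ) a b pf)
    (hp0 : IsBernsteinBasis (lam0 :: μ) a b p0)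
    (hp1 : IsBernsteinBasis (lam1 :: μ) a b p1)
    (k : ℕ) (hk : k ≤ μ.length) :
    (∃ C : ℂ, C ≠ 0 ∧ ∀ x : ℝ, p0 k x - p1 k x = C * pf (k + 1) x) ∧
    (∃ c : ℂ, Tendsto (fun x => p0 k x / p1 k x) (𝓝[≠] b) (𝓝 c) ∧ c ≠ 1) :=
  bernstein_difference_and_limit_general μ lam0 lam1 h01 a b hab hfull hμ pf p0 p1 hpf hp0 hp1 k hk
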